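/- arXiv:1202.4696 — 4 statements merged into one kernel-verified Lean document; each statement's English description precedes it below -/
import Mathlib

section
/- Let r > 0, z ∈ (0,1), and u, v ≥ 0. Then ∑_{k=0}^∞ e^{−u·k} · Γ(r+k)/(Γ(r)·k!) · (1−z)^r · z^k · (1 + z·v)^{−(r+k)} = (1 + z·(1−e^{−u}+v)/(1−z))^{−r}. Equivalently, if N is negative binomial with weights nb_{r,z} and, conditionally on N = k, λ is Γ(r+k, 1/z)-distributed, then E[e^{−u·N − v·λ}] = (1 + z·(1−e^{−u}+v)/(1−z))^{−r}. -/
/-!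
Since `(1 + z v)^{-(r+k)} = (1 + z v)^{-r} · (1 + z v)^{-k}`, the sum is `(1 + z v)^{-r}` times the
probability generating function of `nb_{r,z}` evaluated at `e^{-u} / (1 + z v)`. That generating
function is `((1 - z y) / (1 - z))^{-r}` by the binomial series of `(1 - x)^{-r}`, whose
coefficients `Ring.choose (r + k - 1) k` are `Γ(r + k) / (Γ(r) k!)`.
-/

open Real

theorem Ring.choose_add_sub_one_eq_ascPochhammer_div {K : Type*} [Field K] [CharZero K]
    (r : K) (n : ℕ) :
    Ring.choose (r + n - 1) n = (ascPochhammer K n).eval r / n.factorial := by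
  have h := Ring.factorial_nsmul_multichoose_eq_ascPochhammer r n
  rw [Polynomial.ascPochhammer_smeval_eq_eval, ← Nat.cast_smul_eq_nsmul K, smul_eq_mul] at h
  rw [← Ring.multichoose_eq, ← h, mul_div_cancel_left₀]
  exact_mod_cast n.factorial_ne_zero

theorem Real.Gamma_add_nat_eq_mul_ascPochhammer {r : ℝ} (hr : ∀ m : ℕ, r ≠ -m) (n : ℕ) :
    Gamma (r + n) = Gamma r * (ascPochhammer ℝ n).eval r := by
  induction n with
  | zero => simp
  | succ n ih =>
    have hrn : r + n ≠ 0 := fun h => hr n (by linarith)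
    rw [Nat.cast_succ, ← add_assoc, Gamma_add_one hrn, ih, ascPochhammer_succ_eval]
    ring

theorem Real.hasSum_Gamma_add_div_mul_pow {r x : ℝ} (hr : ∀ m : ℕ, r ≠ -m) (hx : |x| < 1) :
    HasSum (fun k : ℕ => Gamma (r + k) / (Gamma r * k.factorial) * x ^ k) ((1 - x) ^ (-r)) := by
  have hx' : x ∈ Metric.eball (0 : ℝ) 1 := by
    simpa [edist_dist, Real.dist_eq] using hx
  have h := (one_div_one_sub_rpow_hasFPowerSeriesOnBall_zero r).hasSum hx'
  simp only [FormalMultilinearSeries.ofScalars_apply_eq, zero_add, smul_eq_mul,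
    Ring.choose_add_sub_one_eq_ascPochhammer_div] at h
  rw [rpow_neg (by linarith [le_abs_self x]), inv_eq_one_div]
  simp_rw [Gamma_add_nat_eq_mul_ascPochhammer hr, mul_div_mul_left _ _ (Gamma_ne_zero hr)]
  exact h

theorem hasSum_negBinomial_mul_pow {r z y : ℝ} (hr : ∀ m : ℕ, r ≠ -m) (hz : z < 1)
    (hzy : |z * y| < 1) :
    HasSum (fun k : ℕ => Gamma (r + k) / (Gamma r * k.factorial) * (1 - z) ^ r * z ^ k * y ^ k)
      (((1 - z * y) / (1 - z)) ^ (-r)) := by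
  have h1z : 0 ≤ 1 - z := by linarith
  have h1zy : 0 ≤ 1 - z * y := by linarith [le_abs_self (z * y)]
  have h := (hasSum_Gamma_add_div_mul_pow hr hzy).mul_left ((1 - z) ^ r)
  rw [rpow_neg (div_nonneg h1zy h1z), ← inv_rpow (div_nonneg h1zy h1z), inv_div,
    div_rpow h1z h1zy, div_eq_mul_inv, ← rpow_neg h1zy]
  exact h.congr_fun fun k => by rw [mul_pow]; ring

/-- Joint Laplace transform of a negative binomial observation and its
conditionally `Γ(r+k, 1/z)`-distributed intensity: for `r > 0`, `z ∈ (0,1)` and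
`u, v ≥ 0`,
`∑_k e^{−u·k} · nb_{r,z}(k) · (1 + z·v)^{−(r+k)} = (1 + z·(1−e^{−u}+v)/(1−z))^{−r}`. -/
theorem stmt_10 (r z u v : ℝ) (hr : 0 < r) (hz : z ∈ Set.Ioo (0 : ℝ) 1)
    (hu : 0 ≤ u) (hv : 0 ≤ v) :
    ∑' k : ℕ, Real.exp (-(u * k)) *
        (Real.Gamma (r + k) / (Real.Gamma r * Nat.factorial k) * (1 - z) ^ r * z ^ k) *
        (1 + z * v) ^ (-(r + k)) =
      (1 + z * (1 - Real.exp (-u) + v) / (1 - z)) ^ (-r) := by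
  obtain ⟨hz0, hz1⟩ := hz
  set A := 1 + z * v
  set E := Real.exp (-u)
  have hA : 0 < A := by positivity
  have hE : E ≤ 1 := exp_le_one_iff.mpr (by linarith)
  have hy : |z * (E / A)| < 1 := by
    rw [abs_of_nonneg (by positivity), ← mul_div_assoc, div_lt_one hA]
    nlinarith [exp_pos (-u)]
  have hterm : ∀ k : ℕ, exp (-(u * k)) *
      (Gamma (r + k) / (Gamma r * k.factorial) * (1 - z) ^ r * z ^ k) * A ^ (-(r + k)) =
      A ^ (-r) * (Gamma (r + k) / (Gamma r * k.factorial) * (1 - z) ^ r * z ^ k * (E / A) ^ k) := by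
    intro k
    rw [div_pow, ← exp_nat_mul, neg_add, rpow_add hA, rpow_neg hA.le (k : ℝ), rpow_natCast,
      mul_neg, mul_comm u]
    ring
  have hr_ne : ∀ m : ℕ, r ≠ -m := fun m h => by linarith [m.cast_nonneg (α := ℝ)]
  rw [tsum_congr hterm, tsum_mul_left, (hasSum_negBinomial_mul_pow hr_ne hz1 hy).tsum_eq,
    ← mul_rpow hA.le (div_nonneg (by linarith [le_abs_self (z * (E / A))]) (by linarith))]
  congr 1
  field_simp
  ring
end

section
/- Let r > 0, z ∈ (0,1) and let f : ℕ → [0,∞) be any function. Then ∑_{k=0}^∞ k · f(k) · nb_{r,z}(k) = z · ∑_{k=0}^∞ (r+k) · f(k+1) · nb_{r,z}(k). -/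
open Real ENNReal

/-! By `Γ(s+1) = s Γ(s)` the weights satisfy `(k+1) nb(k+1) = z (r+k) nb(k)`. The term `k = 0` of
the left-hand sum vanishes, and after shifting its index by one it agrees with the right-hand
sum term by term. -/

noncomputable def nbWeight (r z : ℝ) (k : ℕ) : ℝ :=
  Real.Gamma (r + k) / (Real.Gamma r * Nat.factorial k) * (1 - z) ^ r * z ^ k

lemma succ_mul_nbWeight_succ {r : ℝ} (z : ℝ) {k : ℕ} (hrk : r + k ≠ 0) :
    (k + 1) * nbWeight r z (k + 1) = z * (r + k) * nbWeight r z k := by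
  have hGamma : Real.Gamma (r + ↑(k + 1)) = (r + k) * Real.Gamma (r + k) := by
    rw [Nat.cast_succ, ← add_assoc, Real.Gamma_add_one hrk]
  simp only [nbWeight, hGamma, Nat.factorial_succ, Nat.cast_mul, pow_succ]
  field_simp
  push_cast
  ring

lemma ENNReal.tsum_natCast_mul_eq_tsum_succ (g : ℕ → ℝ≥0∞) :
    ∑' k : ℕ, (k : ℝ≥0∞) * g k = ∑' k : ℕ, ((k : ℝ≥0∞) + 1) * g (k + 1) := by
  rw [tsum_eq_zero_add' ENNReal.summable]
  simp

lemma succ_mul_ofReal_nbWeight_succ {r z : ℝ} (hz : 0 ≤ z) {k : ℕ} (hrk : 0 < r + k) :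
    ((k : ℝ≥0∞) + 1) * ENNReal.ofReal (nbWeight r z (k + 1)) =
      ENNReal.ofReal z * ENNReal.ofReal (r + k) * ENNReal.ofReal (nbWeight r z k) := by
  have hk : ((k : ℝ≥0∞) + 1) = ENNReal.ofReal ((k : ℝ) + 1) := by
    rw [ENNReal.ofReal_add (by positivity) zero_le_one, ENNReal.ofReal_natCast, ENNReal.ofReal_one]
  rw [hk, ← ENNReal.ofReal_mul (by positivity), succ_mul_nbWeight_succ z hrk.ne',
    ENNReal.ofReal_mul (mul_nonneg hz hrk.le), ENNReal.ofReal_mul hz]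

/-- One-dimensional Zessin integration-by-parts formula for the negative binomial
(Pólya) weights `nb_{r,z}(k) = Γ(r+k)/(Γ(r)·k!) · (1−z)^r · z^k`: for any
`f : ℕ → [0,∞)`,
`∑_k k · f(k) · nb_{r,z}(k) = z · ∑_k (r+k) · f(k+1) · nb_{r,z}(k)`. -/
theorem stmt_12 (r z : ℝ) (hr : 0 < r) (hz : z ∈ Set.Ioo (0 : ℝ) 1) (f : ℕ → ℝ≥0∞) :
    ∑' k : ℕ, (k : ℝ≥0∞) * f k *
        ENNReal.ofReal
          (Real.Gamma (r + k) / (Real.Gamma r * Nat.factorial k) * (1 - z) ^ r * z ^ k) =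
      ENNReal.ofReal z *
        ∑' k : ℕ, ENNReal.ofReal (r + k) * f (k + 1) *
          ENNReal.ofReal
            (Real.Gamma (r + k) / (Real.Gamma r * Nat.factorial k) *
              (1 - z) ^ r * z ^ k) := by
  change ∑' k : ℕ, (k : ℝ≥0∞) * f k * ENNReal.ofReal (nbWeight r z k) =
    ENNReal.ofReal z * ∑' k : ℕ, ENNReal.ofReal (r + k) * f (k + 1) *
      ENNReal.ofReal (nbWeight r z k)
  simp_rw [mul_assoc _ (f _), ENNReal.tsum_natCast_mul_eq_tsum_succ, ← ENNReal.tsum_mul_left]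
  refine tsum_congr fun k => ?_
  rw [mul_left_comm, succ_mul_ofReal_nbWeight_succ hz.1.le (by positivity)]
  ring
end

section
/- Let r > 0 and z ∈ (0,1). If p : ℕ → [0,∞) satisfies ∑_{k=0}^∞ p(k) = 1 and the recursion (k+1)·p(k+1) = z·(r+k)·p(k) for all k ∈ ℕ, then p(k) = Γ(r+k)/(Γ(r)·k!) · (1−z)^r · z^k for every k ∈ ℕ. -/
/-! The recursion forces `p k = p 0 * multichoose r k * z ^ k`, and
`multichoose r k = r (r + 1) ⋯ (r + k - 1) / k! = Γ(r + k) / (Γ(r) k!)`.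
Summing over `k` with the binomial series `∑ multichoose r k * z ^ k = (1 - z) ^ (-r)` then
pins down `p 0 = (1 - z) ^ r`. -/

open Real Polynomial

theorem Ring.multichoose_eq_ascPochhammer_eval_div_factorial {K : Type*} [Field K] [CharZero K]
    (r : K) (k : ℕ) : Ring.multichoose r k = (ascPochhammer K k).eval r / k.factorial := by
  rw [eq_div_iff (Nat.cast_ne_zero.2 k.factorial_ne_zero), mul_comm, ← nsmul_eq_mul,
    factorial_nsmul_multichoose_eq_ascPochhammer, ascPochhammer_smeval_eq_eval]

theorem Ring.succ_mul_multichoose_succ {K : Type*} [Field K] [CharZero K] (r : K) (k : ℕ) :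
    (k + 1) * Ring.multichoose r (k + 1) = (r + k) * Ring.multichoose r k := by
  simp only [multichoose_eq_ascPochhammer_eval_div_factorial, ascPochhammer_succ_eval,
    Nat.factorial_succ]
  push_cast
  field_simp

theorem Real.Gamma_add_nat_eq_ascPochhammer_eval_mul {r : ℝ} (hr : ∀ m : ℕ, r ≠ -m) (k : ℕ) :
    Gamma (r + k) = (ascPochhammer ℝ k).eval r * Gamma r := by
  induction k with
  | zero => simp
  | succ k ih =>
    have : r + k ≠ 0 := fun h => hr k (by linarith)
    rw [Nat.cast_succ, ← add_assoc, Gamma_add_one this, ih, ascPochhammer_succ_eval]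
    ring

theorem Real.Gamma_add_nat_div_eq_multichoose {r : ℝ} (hr : ∀ m : ℕ, r ≠ -m) (k : ℕ) :
    Gamma (r + k) / (Gamma r * k.factorial) = Ring.multichoose r k := by
  rw [Gamma_add_nat_eq_ascPochhammer_eval_mul hr,
    Ring.multichoose_eq_ascPochhammer_eval_div_factorial, mul_comm (Gamma r),
    mul_div_mul_right _ _ (Gamma_ne_zero hr)]

theorem Real.hasSum_multichoose_mul_pow (a : ℝ) {x : ℝ} (hx : |x| < 1) :
    HasSum (fun n => Ring.multichoose a n * x ^ n) (1 / (1 - x) ^ a) := by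
  have hx' : x ∈ Metric.eball (0 : ℝ) 1 := by
    simpa [Metric.mem_eball, edist_zero_right, enorm_eq_nnnorm, ← NNReal.coe_lt_one] using hx
  have := (one_div_one_sub_rpow_hasFPowerSeriesOnBall_zero a).hasSum hx'
  simpa [FormalMultilinearSeries.ofScalars_apply_eq, Ring.multichoose_eq, mul_comm] using this

theorem eq_mul_multichoose_mul_pow_of_succ_mul_eq {K : Type*} [Field K] [CharZero K]
    {r z : K} {p : ℕ → K} (hrec : ∀ k : ℕ, (k + 1) * p (k + 1) = z * (r + k) * p k) (k : ℕ) :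
    p k = p 0 * (Ring.multichoose r k * z ^ k) := by
  induction k with
  | zero => simp
  | succ k ih =>
    apply mul_left_cancel₀ (Nat.cast_add_one_ne_zero k)
    rw [hrec, ih, pow_succ]
    linear_combination p 0 * z ^ k * z * (Ring.succ_mul_multichoose_succ r k).symm

theorem stmt_13_general (r z : ℝ) (hr : 0 < r) (hz : z ∈ Set.Ioo (0 : ℝ) 1)
    (p : ℕ → ℝ) (hsum : ∑' k : ℕ, p k = 1)
    (hrec : ∀ k : ℕ, (k + 1) * p (k + 1) = z * (r + k) * p k) :
    ∀ k : ℕ, p k =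
      Real.Gamma (r + k) / (Real.Gamma r * Nat.factorial k) * (1 - z) ^ r * z ^ k := by
  obtain ⟨hz0, hz1⟩ := hz
  have hp : ∀ k, p k = p 0 * (Ring.multichoose r k * z ^ k) :=
    eq_mul_multichoose_mul_pow_of_succ_mul_eq hrec
  have hseries : HasSum p (p 0 * (1 / (1 - z) ^ r)) := by
    simpa only [← hp] using
      (hasSum_multichoose_mul_pow r (abs_lt.2 ⟨by linarith, hz1⟩)).mul_left (p 0)
  have hp0 : p 0 = (1 - z) ^ r := by
    have hpos : 0 < (1 - z) ^ r := rpow_pos_of_pos (by linarith) r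
    rwa [hseries.tsum_eq, mul_one_div, div_eq_one_iff_eq hpos.ne'] at hsum
  intro k
  rw [Gamma_add_nat_div_eq_multichoose fun m => ((neg_nonpos.2 m.cast_nonneg).trans_lt hr).ne',
    hp k, hp0]
  ring

/-- Uniqueness of the negative binomial weights: if `p : ℕ → [0,∞)` sums to one
and satisfies the recursion `(k+1)·p(k+1) = z·(r+k)·p(k)`, then
`p(k) = Γ(r+k)/(Γ(r)·k!) · (1−z)^r · z^k` for every `k`. -/
theorem stmt_13 (r z : ℝ) (hr : 0 < r) (hz : z ∈ Set.Ioo (0 : ℝ) 1)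
    (p : ℕ → ℝ) (hp : ∀ k, 0 ≤ p k) (hsum : ∑' k : ℕ, p k = 1)
    (hrec : ∀ k : ℕ, (k + 1) * p (k + 1) = z * (r + k) * p k) :
    ∀ k : ℕ, p k =
      Real.Gamma (r + k) / (Real.Gamma r * Nat.factorial k) * (1 - z) ^ r * z ^ k :=
  stmt_13_general r z hr hz p hsum hrec
end

section
/- The map Φ(z, w) = (w·z/(1−z), −w·log(1−z)) is a bijection from (0,1) × (0,∞) onto the set {(u,v) ∈ ℝ² : 0 < v < u}. In particular, for all u, v with 0 < v < u there is a unique pair (z, w) ∈ (0,1) × (0,∞) solving w·z/(1−z) = u and −w·log(1−z) = v. -/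
/-!
Substituting `t = -log (1 - z)`, a bijection `(0,1) → (0,∞)`, turns `Φ` into
`(t, w) ↦ (w (eᵗ - 1), w t)`. The ratio of the two coordinates, `(eᵗ - 1) / t`, is the slope of
the strictly convex `exp` between `0` and `t`, hence strictly increasing in `t`, and it runs from
`1` (as `t → 0⁺`) to `∞`. So `u / v > 1` determines `t`, and then `v` determines `w`.
-/

open Set Filter Topology Real

theorem Set.BijOn.existsUnique_mem_and_eq {α β : Type*} {f : α → β} {s : Set α} {t : Set β}
    (hf : BijOn f s t) {y : β} (hy : y ∈ t) : ∃! x, x ∈ s ∧ f x = y := by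
  obtain ⟨x, hx, rfl⟩ := hf.surjOn hy
  exact ⟨x, ⟨hx, rfl⟩, fun x' ⟨hx', hfx'⟩ => hf.injOn hx' hx hfx'⟩

theorem strictMonoOn_exp_sub_one_div : StrictMonoOn (fun t : ℝ => (exp t - 1) / t) (Ioi 0) := by
  intro x hx y hy hxy
  simpa using strictConvexOn_exp.secant_strict_mono (mem_univ 0) (mem_univ x) (mem_univ y)
    hx.ne' hy.ne' hxy

theorem tendsto_exp_sub_one_div_nhdsGT_zero :
    Tendsto (fun t : ℝ => (exp t - 1) / t) (𝓝[>] 0) (𝓝 1) := by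
  simpa [div_eq_inv_mul] using (hasDerivAt_exp 0).tendsto_slope_zero_right

theorem tendsto_exp_sub_one_div_atTop :
    Tendsto (fun t : ℝ => (exp t - 1) / t) atTop atTop := by
  have h := (tendsto_exp_div_pow_atTop 1).atTop_add tendsto_inv_atTop_zero.neg
  simp only [pow_one] at h
  refine h.congr fun t => ?_
  rw [sub_div, one_div, sub_eq_add_neg]

theorem Ioi_one_subset_image_exp_sub_one_div :
    Ioi 1 ⊆ (fun t : ℝ => (exp t - 1) / t) '' Ioi 0 :=
  isPreconnected_Ioi.intermediate_value_Ioi (l₁ := 𝓝[>] 0) inf_le_right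
    (le_principal_iff.mpr (Ioi_mem_atTop 0))
    ((continuous_exp.sub continuous_const).continuousOn.div continuousOn_id fun _ ht => ht.ne')
    tendsto_exp_sub_one_div_nhdsGT_zero tendsto_exp_sub_one_div_atTop

theorem bijOn_mul_exp_sub_one_mul_self :
    BijOn (fun p : ℝ × ℝ => (p.2 * (exp p.1 - 1), p.2 * p.1)) (Ioi 0 ×ˢ Ioi 0)
      {q : ℝ × ℝ | 0 < q.2 ∧ q.2 < q.1} := by
  refine ⟨?_, ?_, ?_⟩
  · rintro ⟨t, w⟩ ⟨ht, hw⟩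
    have hw : 0 < w := hw
    exact ⟨mul_pos hw ht, mul_lt_mul_of_pos_left (by linarith [add_one_lt_exp ht.ne']) hw⟩
  · rintro ⟨t₁, w₁⟩ ⟨ht₁, hw₁⟩ ⟨t₂, w₂⟩ ⟨ht₂, hw₂⟩ h
    obtain ⟨hu, hv⟩ := Prod.mk.inj h
    have hratio : (exp t₁ - 1) / t₁ = (exp t₂ - 1) / t₂ := by
      rw [← mul_div_mul_left _ t₁ (ne_of_gt hw₁), ← mul_div_mul_left _ t₂ (ne_of_gt hw₂), hu, hv]
    obtain rfl : t₁ = t₂ := strictMonoOn_exp_sub_one_div.injOn ht₁ ht₂ hratio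
    exact Prod.ext rfl (mul_right_cancel₀ (ne_of_gt ht₁) hv)
  · rintro ⟨u, v⟩ ⟨hv, hvu⟩
    obtain ⟨t, ht, hgt⟩ := Ioi_one_subset_image_exp_sub_one_div ((one_lt_div hv).mpr hvu)
    have ht : 0 < t := ht
    have hgt : (exp t - 1) / t = u / v := hgt
    refine ⟨(t, v / t), ⟨ht, div_pos hv ht⟩, Prod.ext ?_ (div_mul_cancel₀ v ht.ne')⟩
    calc v / t * (exp t - 1) = v * ((exp t - 1) / t) := by ring
      _ = u := by rw [hgt, mul_div_cancel₀ u hv.ne']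

theorem bijOn_neg_log_one_sub : BijOn (fun z : ℝ => -log (1 - z)) (Ioo 0 1) (Ioi 0) := by
  refine InvOn.bijOn (f' := fun t => 1 - exp (-t)) ⟨fun z hz => ?_, fun t _ => ?_⟩ ?_ ?_
  · simp [exp_log (sub_pos.mpr hz.2)]
  · simp
  · intro z hz
    simpa using log_neg (sub_pos.mpr hz.2) (by linarith [hz.1])
  · intro t ht
    exact ⟨sub_pos.mpr (exp_lt_one_iff.mpr (neg_lt_zero.mpr ht)), sub_lt_self 1 (exp_pos _)⟩

theorem exp_neg_log_one_sub {z : ℝ} (hz : z < 1) : exp (-log (1 - z)) = (1 - z)⁻¹ := by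
  rw [exp_neg, exp_log (sub_pos.mpr hz)]

/-- The map `Φ(z, w) = (w·z/(1−z), −w·log(1−z))` is a bijection from
`(0,1) × (0,∞)` onto `{(u,v) : 0 < v < u}`; in particular, for `0 < v < u`
there is a unique `(z,w) ∈ (0,1) × (0,∞)` with `w·z/(1−z) = u` and
`−w·log(1−z) = v`. -/
theorem stmt_14 :
    Set.BijOn (fun p : ℝ × ℝ => (p.2 * p.1 / (1 - p.1), -(p.2 * Real.log (1 - p.1))))
      (Ioo (0 : ℝ) 1 ×ˢ Ioi (0 : ℝ)) {q : ℝ × ℝ | 0 < q.2 ∧ q.2 < q.1} ∧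
    ∀ u v : ℝ, 0 < v → v < u →
      ∃! p : ℝ × ℝ, p ∈ Ioo (0 : ℝ) 1 ×ˢ Ioi (0 : ℝ) ∧
        p.2 * p.1 / (1 - p.1) = u ∧ -(p.2 * Real.log (1 - p.1)) = v := by
  have hΦ : BijOn (fun p : ℝ × ℝ => (p.2 * p.1 / (1 - p.1), -(p.2 * log (1 - p.1))))
      (Ioo 0 1 ×ˢ Ioi 0) {q : ℝ × ℝ | 0 < q.2 ∧ q.2 < q.1} := by
    refine (bijOn_mul_exp_sub_one_mul_self.comp
      (bijOn_neg_log_one_sub.prodMap (bijOn_id _))).congr ?_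
    rintro ⟨z, w⟩ ⟨hz, -⟩
    have h1z : 1 - z ≠ 0 := (sub_pos.mpr hz.2).ne'
    simp only [Function.comp_apply, id_eq, exp_neg_log_one_sub hz.2]
    exact Prod.ext (by field_simp; ring) (by ring)
  refine ⟨hΦ, fun u v hv hvu => ?_⟩
  simpa only [Prod.ext_iff] using hΦ.existsUnique_mem_and_eq (y := (u, v)) ⟨hv, hvu⟩
end
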